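/- Let G be the group with presentation ⟨v₁,v₂,h | v₁hv₁⁻¹h⁻¹, v₂hv₂⁻¹h⁻¹, v₁²v₂²h⁻¹⟩. Then there are exactly 3 surjective homomorphisms G → ℤ/2, each sending h to 0, and each factors through ℤ. -/
import Mathlib


open FreeGroup

/-- Relators of π₁(N₂) = ⟨v₁,v₂,h | v₁hv₁⁻¹h⁻¹, v₂hv₂⁻¹h⁻¹, v₁²v₂²h⁻¹⟩,
generators v₁=0, v₂=1, h=2. -/
def relsN2 : Set (FreeGroup (Fin 3)) :=
  { of 0 * of 2 * (of 0)⁻¹ * (of 2)⁻¹,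
    of 1 * of 2 * (of 1)⁻¹ * (of 2)⁻¹,
    of 0 ^ 2 * of 1 ^ 2 * (of 2)⁻¹ }

/-- Reduction mod 2, multiplicatively. -/
def mod2 : Multiplicative ℤ →* Multiplicative (ZMod 2) :=
  AddMonoidHom.toMultiplicative (Int.castAddHom (ZMod 2))

lemma zmod2_sq : ∀ x : Multiplicative (ZMod 2), x ^ 2 = 1 := by decide

lemma relN2_mk_eq_one {r : FreeGroup (Fin 3)} (hr : r ∈ relsN2) :
    PresentedGroup.mk relsN2 r = 1 :=
  (QuotientGroup.eq_one_iff r).2 (Subgroup.subset_normalClosure hr)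

lemma rel3 : (PresentedGroup.of 2 : PresentedGroup relsN2)
    = PresentedGroup.of 0 ^ 2 * PresentedGroup.of 1 ^ 2 := by
  have h := relN2_mk_eq_one (r := of 0 ^ 2 * of 1 ^ 2 * (of 2)⁻¹)
    (by simp [relsN2])
  rw [_root_.map_mul, _root_.map_inv, mul_inv_eq_one, _root_.map_mul, _root_.map_pow, _root_.map_pow] at h
  exact h.symm

def buildf (a b : ZMod 2) : Fin 3 → Multiplicative (ZMod 2) :=
  ![Multiplicative.ofAdd a, Multiplicative.ofAdd b, 1]

lemma buildf_rels (a b : ZMod 2) : ∀ r ∈ relsN2, FreeGroup.lift (buildf a b) r = 1 := by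
  rintro r (rfl | rfl | rfl) <;> simp [buildf, zmod2_sq]

def build (a b : ZMod 2) : PresentedGroup relsN2 →* Multiplicative (ZMod 2) :=
  PresentedGroup.toGroup (buildf_rels a b)

lemma build_of0 (a b : ZMod 2) : build a b (PresentedGroup.of 0) = Multiplicative.ofAdd a :=
  PresentedGroup.toGroup.of _
lemma build_of1 (a b : ZMod 2) : build a b (PresentedGroup.of 1) = Multiplicative.ofAdd b :=
  PresentedGroup.toGroup.of _

lemma phi_of2 (φ : PresentedGroup relsN2 →* Multiplicative (ZMod 2)) :
    φ (PresentedGroup.of 2) = 1 := by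
  rw [rel3, _root_.map_mul, _root_.map_pow, _root_.map_pow, zmod2_sq, zmod2_sq, mul_one]

lemma phi_eq_build (φ : PresentedGroup relsN2 →* Multiplicative (ZMod 2)) :
    φ = build (Multiplicative.toAdd (φ (PresentedGroup.of 0)))
          (Multiplicative.toAdd (φ (PresentedGroup.of 1))) := by
  apply PresentedGroup.ext
  intro x
  fin_cases x
  · simp [build_of0]
  · simp [build_of1]
  · show φ (PresentedGroup.of 2) = build _ _ (PresentedGroup.of 2)
    rw [phi_of2, phi_of2]

lemma zmod2_cases : ∀ y : Multiplicative (ZMod 2),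
    y = 1 ∨ y = Multiplicative.ofAdd (1 : ZMod 2) := by decide

lemma zmod2_ne : ∀ a : ZMod 2, a ≠ 0 → a = 1 := by decide

lemma build_surj {a b : ZMod 2} (h : ¬(a = 0 ∧ b = 0)) : Function.Surjective (build a b) := by
  intro y
  rcases zmod2_cases y with rfl | rfl
  · exact ⟨1, map_one _⟩
  · rcases not_and_or.mp h with ha | hb
    · exact ⟨PresentedGroup.of 0, by rw [build_of0, zmod2_ne a ha]⟩
    · exact ⟨PresentedGroup.of 1, by rw [build_of1, zmod2_ne b hb]⟩

lemma build00_not_surj : ¬ Function.Surjective (build 0 0) := by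
  intro h
  obtain ⟨x, hx⟩ := h (Multiplicative.ofAdd (1 : ZMod 2))
  have hb : build 0 0 = build 0 0 := rfl
  have h1 : build 0 0 x = 1 := by
    have := phi_eq_build (build 0 0)
    rw [build_of0, build_of1] at this
    simp only [toAdd_ofAdd] at this
    -- build 0 0 equals the trivial map on generators; show it is the trivial hom
    have ht : build 0 0 = 1 := by
      apply PresentedGroup.ext
      intro i
      fin_cases i
      · show build 0 0 (PresentedGroup.of 0) = _
        rw [build_of0]; rfl
      · show build 0 0 (PresentedGroup.of 1) = _
        rw [build_of1]; rfl
      · show build 0 0 (PresentedGroup.of 2) = _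
        rw [phi_of2]; rfl
    rw [ht]; rfl
  rw [hx] at h1
  exact absurd h1 (by decide)

lemma surj_ne (φ : PresentedGroup relsN2 →* Multiplicative (ZMod 2))
    (hs : Function.Surjective φ) :
    ¬(Multiplicative.toAdd (φ (PresentedGroup.of 0)) = 0 ∧
      Multiplicative.toAdd (φ (PresentedGroup.of 1)) = 0) := by
  rintro ⟨h0, h1⟩
  have := phi_eq_build φ
  rw [h0, h1] at this
  rw [this] at hs
  exact build00_not_surj hs

def surjEquiv : {φ : PresentedGroup relsN2 →* Multiplicative (ZMod 2) //
    Function.Surjective φ} ≃ {p : ZMod 2 × ZMod 2 // p ≠ (0, 0)} where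
  toFun φ := ⟨(Multiplicative.toAdd (φ.1 (PresentedGroup.of 0)),
      Multiplicative.toAdd (φ.1 (PresentedGroup.of 1))), by
    intro h
    rw [Prod.ext_iff] at h
    exact surj_ne φ.1 φ.2 ⟨h.1, h.2⟩⟩
  invFun p := ⟨build p.1.1 p.1.2, build_surj (by
    intro h
    exact p.2 (Prod.ext h.1 h.2))⟩
  left_inv φ := Subtype.ext (phi_eq_build φ.1).symm
  right_inv p := Subtype.ext (by simp [build_of0, build_of1])

lemma card3 : Nat.card {φ : PresentedGroup relsN2 →* Multiplicative (ZMod 2) //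
    Function.Surjective φ} = 3 := by
  rw [Nat.card_congr surjEquiv, Nat.card_eq_fintype_card]
  decide

def liftf (a b : ZMod 2) : Fin 3 → Multiplicative ℤ :=
  ![Multiplicative.ofAdd (a.val : ℤ), Multiplicative.ofAdd (b.val : ℤ),
    Multiplicative.ofAdd (2 * (a.val : ℤ) + 2 * (b.val : ℤ))]

lemma liftf_rels (a b : ZMod 2) : ∀ r ∈ relsN2, FreeGroup.lift (liftf a b) r = 1 := by
  rintro r (rfl | rfl | rfl)
  · simp only [_root_.map_mul, _root_.map_inv, FreeGroup.lift_apply_of, liftf]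
    simp only [Matrix.cons_val_zero, Matrix.cons_val_one, Matrix.head_cons, Matrix.cons_val_two, Matrix.tail_cons]
    exact commutatorElement_eq_one_iff_mul_comm.2 (mul_comm _ _)
  · simp only [_root_.map_mul, _root_.map_inv, FreeGroup.lift_apply_of, liftf]
    simp only [Matrix.cons_val_one, Matrix.head_cons]
    exact commutatorElement_eq_one_iff_mul_comm.2 (mul_comm _ _)
  · simp only [_root_.map_mul, _root_.map_inv, _root_.map_pow, FreeGroup.lift_apply_of, liftf]
    simp only [Matrix.cons_val_zero, Matrix.cons_val_one, Matrix.head_cons, Matrix.cons_val_two, Matrix.tail_cons]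
    rw [← ofAdd_nsmul, ← ofAdd_nsmul, ← ofAdd_add, ← ofAdd_neg, ← ofAdd_add,
      ← ofAdd_zero]
    congr 1
    ring

def liftHom (a b : ZMod 2) : PresentedGroup relsN2 →* Multiplicative ℤ :=
  PresentedGroup.toGroup (liftf_rels a b)

lemma valcast : ∀ a : ZMod 2, ((a.val : ℤ) : ZMod 2) = a := by decide

lemma mod2_comp_liftHom (a b : ZMod 2) : mod2.comp (liftHom a b) = build a b := by
  apply PresentedGroup.ext
  intro i
  have h0 : mod2.comp (liftHom a b) (PresentedGroup.of 0)
      = Multiplicative.ofAdd (((a.val : ℤ) : ZMod 2)) := by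
    simp only [MonoidHom.comp_apply, liftHom, PresentedGroup.toGroup.of]
    rfl
  have h1 : mod2.comp (liftHom a b) (PresentedGroup.of 1)
      = Multiplicative.ofAdd (((b.val : ℤ) : ZMod 2)) := by
    simp only [MonoidHom.comp_apply, liftHom, PresentedGroup.toGroup.of]
    rfl
  fin_cases i
  · show mod2.comp (liftHom a b) (PresentedGroup.of 0) = build a b (PresentedGroup.of 0)
    rw [h0, build_of0, valcast]
  · show mod2.comp (liftHom a b) (PresentedGroup.of 1) = build a b (PresentedGroup.of 1)
    rw [h1, build_of1, valcast]
  · show mod2.comp (liftHom a b) (PresentedGroup.of 2) = build a b (PresentedGroup.of 2)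
    rw [phi_of2 (mod2.comp (liftHom a b)), phi_of2 (build a b)]

/-- There are exactly 3 epimorphisms π₁(N₂) → ℤ/2; each sends h to 0 and each
factors through ℤ. -/
theorem stmt16 :
    Nat.card {φ : PresentedGroup relsN2 →* Multiplicative (ZMod 2) //
        Function.Surjective φ} = 3 ∧
    ∀ φ : PresentedGroup relsN2 →* Multiplicative (ZMod 2), Function.Surjective φ →
      φ (PresentedGroup.of 2) = Multiplicative.ofAdd (0 : ZMod 2) ∧
      ∃ ψ : PresentedGroup relsN2 →* Multiplicative ℤ, φ = mod2.comp ψ := by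
  refine ⟨card3, fun φ hφ => ⟨phi_of2 φ, ?_⟩⟩
  refine ⟨liftHom (Multiplicative.toAdd (φ (PresentedGroup.of 0)))
    (Multiplicative.toAdd (φ (PresentedGroup.of 1))), ?_⟩
  rw [mod2_comp_liftHom]
  exact phi_eq_build φ
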